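/- Let C ⊆ ℝ^n be a nonempty compact convex set of diameter δ > 0 and let f : ℝ^n → ℝ be convex, differentiable, and L-smooth on C with L > 0. Let (x^t)_{t≥0} be a Frank-Wolfe sequence with short-step rule: x^0 ∈ C, and for every t there is v^t ∈ C with ⟨∇f(x^t), v^t⟩ = min_{v∈C} ⟨∇f(x^t), v⟩, and x^{t+1} = x^t + η^t(v^t − x^t) where η^t = min{1, ⟨∇f(x^t), x^t − v^t⟩ / (L‖x^t − v^t‖₂²)} if v^t ≠ x^t and η^t = 0 otherwise. Then for every t ≥ 1, f(x^t) − min_{x∈C} f(x) ≤ 2Lδ²/(t+2). -/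

import Mathlib

/-!
The short step minimises, over `γ ∈ [0, 1]`, the quadratic upper bound
`f x - γ G + L γ² ‖x - v‖² / 2` that `L`-smoothness gives along the segment from `x` to `v`,
where `G = ⟪∇f x, x - v⟫` is the Frank-Wolfe gap. By convexity the gap dominates
`h = f x - f y`, and `‖x - v‖ ≤ δ`, so every iteration satisfies
`h⁺ ≤ (1 - γ) h + L δ² γ² / 2` for every `γ ∈ [0, 1]`. Choosing `γ = 1` at the first step and
`γ = 2 / (t + 2)` afterwards gives the rate `2 L δ² / (t + 2)` by induction.
-/

open RealInnerProductSpace Set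

noncomputable def shortStep (L G D : ℝ) : ℝ := min 1 (G / (L * D))

theorem shortStep_mem_Icc {L G D : ℝ} (hL : 0 ≤ L) (hG : 0 ≤ G) (hD : 0 ≤ D) :
    shortStep L G D ∈ Icc 0 1 :=
  ⟨le_min zero_le_one (by positivity), min_le_left _ _⟩

theorem isMinOn_shortStep {L G D : ℝ} (hL : 0 < L) (hD : 0 < D) :
    IsMinOn (fun γ => -γ * G + L / 2 * γ ^ 2 * D) (Icc 0 1) (shortStep L G D) := by
  intro γ ⟨hγ0, hγ1⟩
  have hLD : 0 < L * D := by positivity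
  simp only [mem_ofPred_eq, shortStep]
  rcases le_total 1 (G / (L * D)) with h | h
  · rw [min_eq_left h]
    rw [le_div_iff₀ hLD] at h
    nlinarith [mul_nonneg (sub_nonneg.2 hγ1) hLD.le]
  · rw [min_eq_right h]
    have hG' : G = G / (L * D) * (L * D) := (div_mul_cancel₀ _ hLD.ne').symm
    set η := G / (L * D)
    -- completing the square: the difference of the two sides is `L D (γ - η)² / 2`
    rw [hG']
    nlinarith [mul_nonneg hLD.le (sq_nonneg (γ - η))]

section FrankWolfeStep

variable {E : Type*} [NormedAddCommGroup E] [InnerProductSpace ℝ E] {C : Set E} {f : E → ℝ}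
  {a x v y : E}

theorem ConvexOn.inner_gradient_le_sub [CompleteSpace E] (hf : ConvexOn ℝ C f) (hx : x ∈ C)
    (hy : y ∈ C) (hg : HasGradientAt f a x) :
    ⟪a, y - x⟫ ≤ f y - f x := by
  have hline : ConvexOn ℝ (Icc (0 : ℝ) 1) (f ∘ AffineMap.lineMap x y) :=
    (hf.comp_affineMap _).subset (fun _ ht => hf.1.lineMap_mem hx hy ht) (convex_Icc 0 1)
  have hderiv : HasDerivAt (f ∘ AffineMap.lineMap (k := ℝ) x y) ⟪a, y - x⟫ 0 := by
    have h := (AffineMap.lineMap_apply_zero (k := ℝ) x y ▸ hg.hasFDerivAt).comp_hasDerivAt (0 : ℝ)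
      (AffineMap.hasDerivAt_lineMap (a := x) (b := y))
    simpa using h
  simpa [slope_def_field] using hline.le_slope_of_hasDerivAt (left_mem_Icc.2 zero_le_one)
    (right_mem_Icc.2 zero_le_one) zero_lt_one hderiv

theorem inner_sub_nonneg_of_forall_inner_le (hv : ∀ u ∈ C, ⟪a, v⟫ ≤ ⟪a, u⟫) (hx : x ∈ C) :
    0 ≤ ⟪a, x - v⟫ := by
  rw [inner_sub_right]
  linarith [hv x hx]

theorem ConvexOn.sub_le_inner_of_forall_inner_le [CompleteSpace E] (hf : ConvexOn ℝ C f)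
    (hx : x ∈ C) (hy : y ∈ C) (hg : HasGradientAt f a x) (hv : ∀ u ∈ C, ⟪a, v⟫ ≤ ⟪a, u⟫) :
    f x - f y ≤ ⟪a, x - v⟫ := by
  have h := hf.inner_gradient_le_sub hx hy hg
  rw [inner_sub_right] at h ⊢
  linarith [hv y hy]

theorem Convex.add_shortStep_smul_sub_mem (hC : Convex ℝ C) {L : ℝ} (hL : 0 ≤ L) (hx : x ∈ C)
    (hvC : v ∈ C) (hv : ∀ u ∈ C, ⟪a, v⟫ ≤ ⟪a, u⟫) :
    x + shortStep L ⟪a, x - v⟫ (‖x - v‖ ^ 2) • (v - x) ∈ C :=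
  hC.add_smul_sub_mem hx hvC
    (shortStep_mem_Icc hL (inner_sub_nonneg_of_forall_inner_le hv hx) (by positivity))

theorem le_sub_mul_inner_add_of_smooth {L η : ℝ} (hsmooth : f (x + η • (v - x)) ≤
      f x + ⟪a, x + η • (v - x) - x⟫ + L / 2 * ‖x + η • (v - x) - x‖ ^ 2) :
    f (x + η • (v - x)) ≤ f x - η * ⟪a, x - v⟫ + L / 2 * η ^ 2 * ‖x - v‖ ^ 2 := by
  have hstep : x + η • (v - x) - x = -(η • (x - v)) := by module
  rw [hstep, inner_neg_right, inner_smul_right, norm_neg, norm_smul, mul_pow, Real.norm_eq_abs,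
    sq_abs] at hsmooth
  linarith

theorem ConvexOn.sub_le_one_sub_mul_add_of_shortStep [CompleteSpace E] (hf : ConvexOn ℝ C f)
    {L δ γ : ℝ} (hL : 0 < L) (hx : x ∈ C) (hy : y ∈ C) (hvC : v ∈ C)
    (hg : HasGradientAt f a x) (hv : ∀ u ∈ C, ⟪a, v⟫ ≤ ⟪a, u⟫)
    (hsmooth : ∀ z ∈ C, f z ≤ f x + ⟪a, z - x⟫ + L / 2 * ‖z - x‖ ^ 2)
    (hδ : ‖x - v‖ ≤ δ) (hγ : γ ∈ Icc 0 1) :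
    f (x + shortStep L ⟪a, x - v⟫ (‖x - v‖ ^ 2) • (v - x)) - f y ≤
      (1 - γ) * (f x - f y) + L / 2 * γ ^ 2 * δ ^ 2 := by
  set G := ⟪a, x - v⟫
  set D := ‖x - v‖ ^ 2
  have hdescent := le_sub_mul_inner_add_of_smooth
    (hsmooth _ (hf.1.add_shortStep_smul_sub_mem hL.le hx hvC hv))
  have hquadratic : -shortStep L G D * G + L / 2 * shortStep L G D ^ 2 * D ≤
      -γ * G + L / 2 * γ ^ 2 * D := by
    rcases eq_or_ne x v with rfl | hxv
    · simp [G, D, shortStep]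
    · exact isMinOn_shortStep hL (by positivity [sub_ne_zero.2 hxv]) hγ
  have hgap : γ * (f x - f y) ≤ γ * G :=
    mul_le_mul_of_nonneg_left (hf.sub_le_inner_of_forall_inner_le hx hy hg hv) hγ.1
  have hdiam : L / 2 * γ ^ 2 * D ≤ L / 2 * γ ^ 2 * δ ^ 2 :=
    mul_le_mul_of_nonneg_left (pow_le_pow_left₀ (norm_nonneg _) hδ 2) (by positivity)
  linarith

end FrankWolfeStep

theorem le_two_mul_div_of_forall_le_one_sub_mul_add {h : ℕ → ℝ} {K : ℝ} (hK : 0 ≤ K)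
    (hrec : ∀ t, ∀ γ ∈ Icc (0 : ℝ) 1, h (t + 1) ≤ (1 - γ) * h t + K / 2 * γ ^ 2) :
    ∀ t, 1 ≤ t → h t ≤ 2 * K / (t + 2) := by
  intro t ht
  induction t, ht using Nat.le_induction with
  | base =>
    have h1 := hrec 0 1 (right_mem_Icc.2 zero_le_one)
    norm_num at h1 ⊢
    linarith
  | succ t ht ih =>
    have ht2 : (0 : ℝ) < t + 2 := by positivity
    have hγ : 2 / ((t : ℝ) + 2) ∈ Icc (0 : ℝ) 1 :=
      ⟨by positivity, (div_le_one ht2).2 (by linarith [(Nat.cast_nonneg t : (0 : ℝ) ≤ t)])⟩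
    have hstep := hrec t _ hγ
    have hcontract : (1 - 2 / ((t : ℝ) + 2)) * h t ≤ (1 - 2 / ((t : ℝ) + 2)) * (2 * K / (t + 2)) :=
      mul_le_mul_of_nonneg_left ih (sub_nonneg.2 hγ.2)
    -- `2K(t+1)/(t+2)² ≤ 2K/(t+3)` because `(t+1)(t+3) ≤ (t+2)²`
    have hbound : (1 - 2 / ((t : ℝ) + 2)) * (2 * K / (t + 2)) + K / 2 * (2 / ((t : ℝ) + 2)) ^ 2 ≤
        2 * K / ((t + 1 : ℕ) + 2) := by
      have hsum : (1 - 2 / ((t : ℝ) + 2)) * (2 * K / (t + 2)) + K / 2 * (2 / ((t : ℝ) + 2)) ^ 2 =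
          2 * K * (t + 1) / (t + 2) ^ 2 := by
        field_simp
        ring
      rw [hsum, div_le_div_iff₀ (by positivity) (by positivity)]
      push_cast
      nlinarith
    linarith

theorem fw_short_step_sublinear_convergence_general
    (n : ℕ) (C : Set (EuclideanSpace ℝ (Fin n)))
    (hCcomp : IsCompact C) (hCconv : Convex ℝ C)
    (δ : ℝ) (hdiam : Metric.diam C = δ)
    (f : EuclideanSpace ℝ (Fin n) → ℝ)
    (g : EuclideanSpace ℝ (Fin n) → EuclideanSpace ℝ (Fin n))
    (L : ℝ) (hL : 0 < L)
    (hconv : ConvexOn ℝ C f)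
    (hgrad : ∀ x ∈ C, HasGradientAt f (g x) x)
    (hsmooth : ∀ x ∈ C, ∀ y ∈ C,
      f y ≤ f x + ⟪g x, y - x⟫ + L / 2 * ‖y - x‖ ^ 2)
    (x v : ℕ → EuclideanSpace ℝ (Fin n)) (η : ℕ → ℝ)
    (hx0 : x 0 ∈ C)
    (hvC : ∀ t, v t ∈ C)
    (hvmin : ∀ t, ∀ u ∈ C, ⟪g (x t), v t⟫ ≤ ⟪g (x t), u⟫)
    (hηstep : ∀ t, v t ≠ x t →
      η t = min 1 (⟪g (x t), x t - v t⟫ / (L * ‖x t - v t‖ ^ 2)))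
    (hηzero : ∀ t, v t = x t → η t = 0)
    (hupdate : ∀ t, x (t + 1) = x t + η t • (v t - x t)) :
    ∀ t : ℕ, 1 ≤ t → ∀ y ∈ C, f (x t) - f y ≤ 2 * L * δ ^ 2 / ((t : ℝ) + 2) := by
  -- `G / 0 = 0`, so `shortStep` also yields the step `0` prescribed when `v t = x t`
  have hη : ∀ t, η t = shortStep L ⟪g (x t), x t - v t⟫ (‖x t - v t‖ ^ 2) := fun t => by
    rcases eq_or_ne (v t) (x t) with h | h
    · simp [hηzero t h, h, shortStep]
    · exact hηstep t h
  have hxC : ∀ t, x t ∈ C := fun t => by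
    induction t with
    | zero => exact hx0
    | succ t ih =>
      rw [hupdate, hη]
      exact hCconv.add_shortStep_smul_sub_mem hL.le ih (hvC t) (hvmin t)
  have hdiamC : ∀ t, ‖x t - v t‖ ≤ δ := fun t => by
    rw [← dist_eq_norm, ← hdiam]
    exact Metric.dist_le_diam_of_mem hCcomp.isBounded (hxC t) (hvC t)
  intro t ht y hy
  have hrec (s : ℕ) (γ : ℝ) (hγ : γ ∈ Icc 0 1) :
      f (x (s + 1)) - f y ≤ (1 - γ) * (f (x s) - f y) + L * δ ^ 2 / 2 * γ ^ 2 := by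
    rw [hupdate, hη, mul_div_right_comm, mul_right_comm]
    exact hconv.sub_le_one_sub_mul_add_of_shortStep hL (hxC s) hy (hvC s) (hgrad _ (hxC s))
      (hvmin s) (hsmooth _ (hxC s)) (hdiamC s) hγ
  rw [mul_assoc]
  exact le_two_mul_div_of_forall_le_one_sub_mul_add (h := fun s => f (x s) - f y)
    (by positivity) hrec t ht

/-- Sublinear convergence of the Frank-Wolfe algorithm with the
short-step rule. -/
theorem fw_short_step_sublinear_convergence
    (n : ℕ) (C : Set (EuclideanSpace ℝ (Fin n)))
    (hCne : C.Nonempty) (hCcomp : IsCompact C) (hCconv : Convex ℝ C)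
    (δ : ℝ) (hδ : 0 < δ) (hdiam : Metric.diam C = δ)
    (f : EuclideanSpace ℝ (Fin n) → ℝ)
    (g : EuclideanSpace ℝ (Fin n) → EuclideanSpace ℝ (Fin n))
    (L : ℝ) (hL : 0 < L)
    (hconv : ConvexOn ℝ C f)
    (hgrad : ∀ x ∈ C, HasGradientAt f (g x) x)
    (hsmooth : ∀ x ∈ C, ∀ y ∈ C,
      f y ≤ f x + ⟪g x, y - x⟫ + L / 2 * ‖y - x‖ ^ 2)
    (x v : ℕ → EuclideanSpace ℝ (Fin n)) (η : ℕ → ℝ)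
    (hx0 : x 0 ∈ C)
    (hvC : ∀ t, v t ∈ C)
    (hvmin : ∀ t, ∀ u ∈ C, ⟪g (x t), v t⟫ ≤ ⟪g (x t), u⟫)
    (hηstep : ∀ t, v t ≠ x t →
      η t = min 1 (⟪g (x t), x t - v t⟫ / (L * ‖x t - v t‖ ^ 2)))
    (hηzero : ∀ t, v t = x t → η t = 0)
    (hupdate : ∀ t, x (t + 1) = x t + η t • (v t - x t)) :
    ∀ t : ℕ, 1 ≤ t → ∀ y ∈ C, f (x t) - f y ≤ 2 * L * δ ^ 2 / ((t : ℝ) + 2) :=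
  fw_short_step_sublinear_convergence_general n C hCcomp hCconv δ hdiam f g L hL hconv hgrad hsmooth
    x v η hx0 hvC hvmin hηstep hηzero hupdate
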